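/- arXiv:2409.10212 — 3 statements merged into one kernel-verified Lean document; each statement's English description precedes it below -/
import Mathlib

section
/- Fix τ, γ ∈ [0,∞) with 3τγ² ≤ 1. Then for all ζ ∈ [0,∞), 2τ − 2τ·(1 + γ√3·ζ)·exp(−γ√3·ζ) ≤ ζ². Conversely, if 3τγ² > 1 then there exists ζ > 0 with 2τ − 2τ·(1 + γ√3·ζ)·exp(−γ√3·ζ) > ζ². -/
/-!
With `x = γ √3 ζ` the left-hand side is `2 τ (1 - (1 + x) e^{-x})`, and for `x ≥ 0`
`x² / 2 - x³ / 3 ≤ 1 - (1 + x) e^{-x} ≤ x² / 2`, both bounds by comparing derivatives from `x = 0`.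
The upper bound gives `LHS ≤ 3 τ γ² ζ² ≤ ζ²`; the lower bound gives `LHS ≥ 3 τ γ² ζ² - O(ζ³)`,
which exceeds `ζ²` for small `ζ > 0` once `3 τ γ² > 1`.
-/

open Real

theorem le_of_hasDerivAt_le_of_nonneg {f f' g g' : ℝ → ℝ} (hf : ∀ t, HasDerivAt f (f' t) t)
    (hg : ∀ t, HasDerivAt g (g' t) t) (h₀ : f 0 ≤ g 0) (hle : ∀ t, 0 ≤ t → f' t ≤ g' t)
    {x : ℝ} (hx : 0 ≤ x) : f x ≤ g x :=
  image_le_of_deriv_right_le_deriv_boundary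
    (fun t _ => (hf t).continuousAt.continuousWithinAt) (fun t _ => (hf t).hasDerivWithinAt)
    h₀ (fun t _ => (hg t).continuousAt.continuousWithinAt) (fun t _ => (hg t).hasDerivWithinAt)
    (fun t ht => hle t ht.1) ⟨hx, le_rfl⟩

/-- `k̄(z) = τ * maternProfile (γ * √3 * ‖z‖) + σ`. -/
noncomputable def maternProfile (x : ℝ) : ℝ := (1 + x) * exp (-x)

theorem hasDerivAt_maternProfile (x : ℝ) : HasDerivAt maternProfile (-(x * exp (-x))) x := by
  have h : HasDerivAt (fun t => (1 + t) * exp (-t)) (1 * exp (-x) + (1 + x) * (exp (-x) * -1)) x :=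
    ((hasDerivAt_id' x).const_add 1).mul (hasDerivAt_neg x).exp
  exact h.congr_deriv (by ring)

theorem hasDerivAt_one_sub_maternProfile (x : ℝ) :
    HasDerivAt (fun t => 1 - maternProfile t) (x * exp (-x)) x := by
  simpa using (hasDerivAt_maternProfile x).const_sub 1

theorem one_sub_maternProfile_le {x : ℝ} (hx : 0 ≤ x) : 1 - maternProfile x ≤ x ^ 2 / 2 :=
  le_of_hasDerivAt_le_of_nonneg (g := fun t => t ^ 2 / 2) hasDerivAt_one_sub_maternProfile
    (fun t => by simpa using (hasDerivAt_pow 2 t).div_const 2) (by simp [maternProfile])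
    (fun t ht => mul_le_of_le_one_right ht (exp_le_one_iff.mpr (by linarith))) hx

theorem le_one_sub_maternProfile {x : ℝ} (hx : 0 ≤ x) :
    x ^ 2 / 2 - x ^ 3 / 3 ≤ 1 - maternProfile x := by
  refine le_of_hasDerivAt_le_of_nonneg (f := fun t => t ^ 2 / 2 - t ^ 3 / 3)
    (f' := fun t => t - t ^ 2) (fun t => ?_) hasDerivAt_one_sub_maternProfile
    (by simp [maternProfile]) (fun t ht => ?_) hx
  · have h := ((hasDerivAt_pow 2 t).div_const 2).sub ((hasDerivAt_pow 3 t).div_const 3)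
    exact h.congr_deriv (by push_cast; ring)
  · calc t - t ^ 2 = t * (-t + 1) := by ring
      _ ≤ t * exp (-t) := mul_le_mul_of_nonneg_left (add_one_le_exp (-t)) ht

theorem two_mul_one_sub_maternProfile_le {τ a ζ : ℝ} (hτ : 0 ≤ τ) (ha : 0 ≤ a)
    (h : τ * a ^ 2 ≤ 1) (hζ : 0 ≤ ζ) : 2 * τ * (1 - maternProfile (a * ζ)) ≤ ζ ^ 2 :=
  calc 2 * τ * (1 - maternProfile (a * ζ)) ≤ 2 * τ * ((a * ζ) ^ 2 / 2) := by
        gcongr; exact one_sub_maternProfile_le (by positivity)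
    _ = τ * a ^ 2 * ζ ^ 2 := by ring
    _ ≤ ζ ^ 2 := mul_le_of_le_one_left (sq_nonneg ζ) h

theorem exists_lt_two_mul_one_sub_maternProfile {τ a : ℝ} (ha : 0 ≤ a) (h : 1 < τ * a ^ 2) :
    ∃ ζ, 0 < ζ ∧ ζ ^ 2 < 2 * τ * (1 - maternProfile (a * ζ)) := by
  have ha_pos : 0 < a := ha.lt_of_ne (by rintro rfl; norm_num at h)
  have hτ : 0 < τ := pos_of_mul_pos_left (one_pos.trans h) (by positivity)
  set c := τ * a ^ 2 - 1
  have hc : 0 < c := sub_pos.mpr h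
  have hζ : 0 < 3 * c / (4 * τ * a ^ 3) := by positivity
  have hcubic : 2 * τ * a ^ 3 * (3 * c / (4 * τ * a ^ 3)) = 3 * c / 2 := by field_simp; ring
  -- with this `ζ` the cubic term of `le_one_sub_maternProfile` costs only half of the excess `c ζ ^ 2`
  refine ⟨_, hζ, ?_⟩
  generalize 3 * c / (4 * τ * a ^ 3) = ζ at hζ hcubic ⊢
  calc ζ ^ 2 < (1 + c / 2) * ζ ^ 2 := by nlinarith [pow_pos hζ 2]
    _ = 2 * τ * ((a * ζ) ^ 2 / 2 - (a * ζ) ^ 3 / 3) := by linear_combination (ζ ^ 2 / 3) * hcubic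
    _ ≤ 2 * τ * (1 - maternProfile (a * ζ)) :=
        mul_le_mul_of_nonneg_left (le_one_sub_maternProfile (by positivity)) (by positivity)

theorem matern_zero_delta_viability (τ γ : ℝ) (hτ : 0 ≤ τ) (hγ : 0 ≤ γ) :
    (3 * τ * γ ^ 2 ≤ 1 →
      ∀ ζ : ℝ, 0 ≤ ζ →
        2 * τ - 2 * τ * (1 + γ * Real.sqrt 3 * ζ) * Real.exp (-(γ * Real.sqrt 3 * ζ)) ≤ ζ ^ 2) ∧
    (3 * τ * γ ^ 2 > 1 →
      ∃ ζ : ℝ, 0 < ζ ∧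
        2 * τ - 2 * τ * (1 + γ * Real.sqrt 3 * ζ) * Real.exp (-(γ * Real.sqrt 3 * ζ)) > ζ ^ 2) := by
  have hlhs (ζ : ℝ) : 2 * τ - 2 * τ * (1 + γ * √3 * ζ) * exp (-(γ * √3 * ζ)) =
      2 * τ * (1 - maternProfile (γ * √3 * ζ)) := by
    unfold maternProfile; ring
  have hscale : τ * (γ * √3) ^ 2 = 3 * τ * γ ^ 2 := by
    rw [mul_pow, sq_sqrt zero_le_three]; ring
  have hscale_nonneg : 0 ≤ γ * √3 := by positivity
  simp only [hlhs]
  exact ⟨fun h _ hζ => two_mul_one_sub_maternProfile_le hτ hscale_nonneg (hscale ▸ h) hζ,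
    fun h => exists_lt_two_mul_one_sub_maternProfile hscale_nonneg (hscale ▸ h)⟩
end

section
/- Let m ≥ 1, μ ∈ [0,1), and suppose f : ℝ^{2m} × ℝ → ℝ satisfies ‖f(x,v)‖² ≤ (μ/m)‖x‖² + ω(‖v‖) for all x ∈ ℝ^{2m}, v ∈ ℝ, where ω is of class K. Let V(x) = xᵀPx with P as above. Then along the system x⁺ = Ax + G f(x,v) + G ε + H v one has V(x⁺) ≤ λ V(x) + ϱ_u(‖v‖) + ϱ_e(‖ε‖), where λ = 1 − (1−μ)²/m ∈ [0,1), ϱ_u(s) = m(2−μ)ω(s) + m s², and ϱ_e(s) = m·(2−μ)/(1−μ)·s². -/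
open Matrix

/-- Upper shift matrix. -/
def Smat (m : ℕ) : Matrix (Fin m) (Fin m) ℝ :=
  Matrix.of fun i j => if (i : ℕ) + 1 = (j : ℕ) then 1 else 0

/-- Last basis vector. -/
def Bvec (m : ℕ) : Fin m → ℝ := fun i => if (i : ℕ) = m - 1 then 1 else 0

/-- A = diag(S, S). -/
def Amat (m : ℕ) : Matrix (Fin m ⊕ Fin m) (Fin m ⊕ Fin m) ℝ :=
  Matrix.fromBlocks (Smat m) 0 0 (Smat m)

/-- G = col(B, 0). -/
def Gvec (m : ℕ) : Fin m ⊕ Fin m → ℝ := Sum.elim (Bvec m) 0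

/-- H = col(0, B). -/
def Hvec (m : ℕ) : Fin m ⊕ Fin m → ℝ := Sum.elim 0 (Bvec m)

/-- R = diag(1, 2, …, m). -/
def Rmat (m : ℕ) : Matrix (Fin m) (Fin m) ℝ :=
  Matrix.diagonal fun i => ((i : ℕ) : ℝ) + 1

/-- P = diag(R, R). -/
def Pmat (m : ℕ) : Matrix (Fin m ⊕ Fin m) (Fin m ⊕ Fin m) ℝ :=
  Matrix.fromBlocks (Rmat m) 0 0 (Rmat m)

/-- A class-K function: continuous, strictly increasing on `[0, ∞)`, vanishing at `0`. -/
def IsClassK (ω : ℝ → ℝ) : Prop :=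
  ContinuousOn ω (Set.Ici 0) ∧ StrictMonoOn ω (Set.Ici 0) ∧ ω 0 = 0

/-!
In each of the two shift-register blocks the weight `R = diag(1, …, m)` satisfies
`SᵀRS = R - 1`, `RB = m B` and `SᵀB = 0`, so one step of the closed loop changes `V(x) = xᵀPx`
by exactly `-‖x‖² + m (f + ε)² + m v²`. Young's inequality splits `(f + ε)²`, the growth bound
on `f` consumes `μ (2 - μ) ‖x‖²` of the decrease, and the remaining `-(1 - μ)² ‖x‖²` is at most
`-(1 - μ)² V(x) / m` because `V(x) ≤ m ‖x‖²`.
-/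

lemma two_mul_le_mul_sq_add_inv_mul_sq {δ : ℝ} (hδ : 0 < δ) (a b : ℝ) :
    2 * a * b ≤ δ * a ^ 2 + δ⁻¹ * b ^ 2 := by
  have key : δ * a ^ 2 + δ⁻¹ * b ^ 2 - 2 * a * b = δ⁻¹ * (δ * a - b) ^ 2 := by
    field_simp
    ring
  nlinarith [key, show 0 ≤ δ⁻¹ * (δ * a - b) ^ 2 by positivity]

lemma one_sub_sq_div_mem_Ico {μ M : ℝ} (hμ : μ ∈ Set.Ico 0 1) (hM : 1 ≤ M) :
    1 - (1 - μ) ^ 2 / M ∈ Set.Ico 0 1 := by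
  obtain ⟨hμ0, hμ1⟩ := hμ
  have hpos : 0 < (1 - μ) ^ 2 / M := div_pos (pow_pos (by linarith) 2) (by linarith)
  have hle : (1 - μ) ^ 2 / M ≤ 1 := by
    rw [div_le_one (by linarith)]
    nlinarith
  constructor <;> linarith

lemma sub_add_mul_add_sq_le {M μ V N F ε w : ℝ} (hM : 0 < M) (hμ : μ ∈ Set.Ico 0 1)
    (hV : V ≤ M * N) (hF : F ^ 2 ≤ μ / M * N + w) :
    V - N + M * (F + ε) ^ 2 ≤
      (1 - (1 - μ) ^ 2 / M) * V + M * (2 - μ) * w + M * (2 - μ) / (1 - μ) * ε ^ 2 := by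
  obtain ⟨hμ0, hμ1⟩ := hμ
  have h1μ : 0 < 1 - μ := by linarith
  have young := two_mul_le_mul_sq_add_inv_mul_sq h1μ F ε
  have hN : (1 - μ) ^ 2 / M * V ≤ (1 - μ) ^ 2 * N := by
    rw [div_mul_eq_mul_div, div_le_iff₀ hM]
    nlinarith [sq_nonneg (1 - μ)]
  calc V - N + M * (F + ε) ^ 2
      = V - N + M * (F ^ 2 + 2 * F * ε + ε ^ 2) := by ring
    _ ≤ V - N + M * ((2 - μ) * F ^ 2 + (2 - μ) / (1 - μ) * ε ^ 2) := by
        have hsplit : (2 - μ) / (1 - μ) = 1 + (1 - μ)⁻¹ := by field_simp; ring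
        gcongr V - N + M * ?_
        rw [hsplit]
        linarith
    _ ≤ V - N + M * ((2 - μ) * (μ / M * N + w) + (2 - μ) / (1 - μ) * ε ^ 2) := by
        gcongr
        linarith
    _ = V - (1 - μ) ^ 2 * N + M * (2 - μ) * w + M * (2 - μ) / (1 - μ) * ε ^ 2 := by
        field_simp
        ring
    _ ≤ _ := by linarith

lemma Matrix.IsSymm.add_dotProduct_mulVec_add {n : Type*} [Fintype n] {M : Matrix n n ℝ}
    (hM : M.IsSymm) (u w : n → ℝ) :
    (u + w) ⬝ᵥ (M *ᵥ (u + w)) = u ⬝ᵥ (M *ᵥ u) + 2 * (u ⬝ᵥ (M *ᵥ w)) + w ⬝ᵥ (M *ᵥ w) := by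
  have hwu : w ⬝ᵥ (M *ᵥ u) = u ⬝ᵥ (M *ᵥ w) := by
    rw [dotProduct_mulVec, ← mulVec_transpose, hM.eq, dotProduct_comm]
  rw [mulVec_add, dotProduct_add, add_dotProduct, add_dotProduct, hwu]
  ring

lemma mulVec_dotProduct_mulVec_mulVec {n : Type*} [Fintype n] (S R : Matrix n n ℝ) (y z : n → ℝ) :
    (S *ᵥ y) ⬝ᵥ (R *ᵥ (S *ᵥ z)) = y ⬝ᵥ ((Sᵀ * R * S) *ᵥ z) := by
  rw [mulVec_mulVec, dotProduct_mulVec, ← vecMul_transpose, vecMul_vecMul, ← dotProduct_mulVec,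
    Matrix.mul_assoc]

lemma dotProduct_diagonal_mulVec_le {n : Type*} [Fintype n] [DecidableEq n] {d : n → ℝ} {c : ℝ}
    (hd : ∀ i, d i ≤ c) (x : n → ℝ) : x ⬝ᵥ (diagonal d *ᵥ x) ≤ c * (x ⬝ᵥ x) := by
  simp only [mulVec_diagonal, dotProduct, Finset.mul_sum]
  refine Finset.sum_le_sum fun i _ => ?_
  nlinarith [mul_nonneg (sub_nonneg.2 (hd i)) (mul_self_nonneg (x i))]

lemma Smat_transpose_mul_Rmat_mul_Smat (m : ℕ) : (Smat m)ᵀ * Rmat m * Smat m = Rmat m - 1 := by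
  ext j k
  rw [Matrix.mul_apply]
  simp only [Smat, Rmat, Matrix.mul_diagonal, Matrix.transpose_apply, Matrix.of_apply,
    Matrix.sub_apply, Matrix.diagonal_apply, Matrix.one_apply, ite_mul, one_mul, zero_mul, mul_ite,
    mul_one, mul_zero]
  by_cases hjk : j = k
  · subst hjk
    simp only [if_true, add_sub_cancel_right]
    obtain ⟨_ | j, hj⟩ := j
    · simp
    · rw [Finset.sum_eq_single ⟨j, by omega⟩] <;> simp +contextual [Fin.ext_iff]
  · rw [if_neg hjk, if_neg hjk, sub_zero]
    refine Finset.sum_eq_zero fun l _ => ?_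
    rw [Fin.ext_iff] at hjk
    split_ifs <;> first | rfl | omega

lemma Smat_transpose_mulVec_Bvec (m : ℕ) : (Smat m)ᵀ *ᵥ Bvec m = 0 := by
  ext j
  simp only [Smat, Bvec, mulVec, dotProduct, transpose_apply, of_apply, ite_mul, one_mul,
    zero_mul, Pi.zero_apply]
  refine Finset.sum_eq_zero fun l _ => ?_
  have := j.isLt
  split_ifs <;> first | rfl | omega

lemma Rmat_mulVec_Bvec (m : ℕ) : Rmat m *ᵥ Bvec m = (m : ℝ) • Bvec m := by
  ext j
  simp only [Rmat, Bvec, mulVec_diagonal, Pi.smul_apply, smul_eq_mul, mul_ite, mul_one, mul_zero]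
  split_ifs with h
  · have := j.isLt
    rw [h]
    norm_cast
    omega
  · rfl

lemma Bvec_dotProduct_Bvec {m : ℕ} (hm : m ≠ 0) : Bvec m ⬝ᵥ Bvec m = 1 := by
  rw [dotProduct, Finset.sum_eq_single ⟨m - 1, by omega⟩] <;> simp +contextual [Bvec, Fin.ext_iff]

lemma Rmat_quadForm_shift_add_smul_Bvec {m : ℕ} (hm : m ≠ 0) (y : Fin m → ℝ) (c : ℝ) :
    (Smat m *ᵥ y + c • Bvec m) ⬝ᵥ (Rmat m *ᵥ (Smat m *ᵥ y + c • Bvec m)) =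
      y ⬝ᵥ (Rmat m *ᵥ y) - y ⬝ᵥ y + m * c ^ 2 := by
  have hshift : (Smat m *ᵥ y) ⬝ᵥ (Rmat m *ᵥ (Smat m *ᵥ y)) = y ⬝ᵥ (Rmat m *ᵥ y) - y ⬝ᵥ y := by
    rw [mulVec_dotProduct_mulVec_mulVec, Smat_transpose_mul_Rmat_mul_Smat, sub_mulVec, one_mulVec,
      dotProduct_sub]
  have hcross : (Smat m *ᵥ y) ⬝ᵥ (Rmat m *ᵥ (c • Bvec m)) = 0 := by
    rw [dotProduct_comm, dotProduct_mulVec, ← mulVec_transpose, mulVec_smul, Rmat_mulVec_Bvec,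
      mulVec_smul, mulVec_smul, Smat_transpose_mulVec_Bvec, smul_zero, smul_zero, zero_dotProduct]
  have hinput : (c • Bvec m) ⬝ᵥ (Rmat m *ᵥ (c • Bvec m)) = m * c ^ 2 := by
    rw [mulVec_smul, Rmat_mulVec_Bvec, smul_dotProduct, dotProduct_smul, dotProduct_smul,
      Bvec_dotProduct_Bvec hm, smul_eq_mul, smul_eq_mul, smul_eq_mul]
    ring
  rw [IsSymm.add_dotProduct_mulVec_add (M := Rmat m) (isSymm_diagonal _), hshift, hcross, hinput]
  ring

lemma Pmat_quadForm_sumElim (m : ℕ) (y z : Fin m → ℝ) :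
    Sum.elim y z ⬝ᵥ (Pmat m *ᵥ Sum.elim y z) = y ⬝ᵥ (Rmat m *ᵥ y) + z ⬝ᵥ (Rmat m *ᵥ z) := by
  simp [Pmat, fromBlocks_mulVec, sumElim_dotProduct_sumElim]

lemma Amat_mulVec_add_smul_Gvec_add_smul_Hvec (m : ℕ) (x : Fin m ⊕ Fin m → ℝ) (a v : ℝ) :
    Amat m *ᵥ x + a • Gvec m + v • Hvec m =
      Sum.elim (Smat m *ᵥ (x ∘ Sum.inl) + a • Bvec m) (Smat m *ᵥ (x ∘ Sum.inr) + v • Bvec m) := by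
  ext (i | i) <;> simp [Amat, Gvec, Hvec, fromBlocks_mulVec]

lemma Pmat_quadForm_closedLoop {m : ℕ} (hm : m ≠ 0) (x : Fin m ⊕ Fin m → ℝ) (a v : ℝ) :
    (Amat m *ᵥ x + a • Gvec m + v • Hvec m) ⬝ᵥ (Pmat m *ᵥ (Amat m *ᵥ x + a • Gvec m + v • Hvec m)) =
      x ⬝ᵥ (Pmat m *ᵥ x) - x ⬝ᵥ x + m * a ^ 2 + m * v ^ 2 := by
  obtain ⟨y, z, rfl⟩ : ∃ y z, x = Sum.elim y z := ⟨_, _, (Sum.elim_comp_inl_inr x).symm⟩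
  rw [Amat_mulVec_add_smul_Gvec_add_smul_Hvec, Sum.elim_comp_inl, Sum.elim_comp_inr,
    Pmat_quadForm_sumElim, Pmat_quadForm_sumElim, Rmat_quadForm_shift_add_smul_Bvec hm,
    Rmat_quadForm_shift_add_smul_Bvec hm, sumElim_dotProduct_sumElim]
  ring

lemma Pmat_quadForm_le (m : ℕ) (x : Fin m ⊕ Fin m → ℝ) : x ⬝ᵥ (Pmat m *ᵥ x) ≤ m * (x ⬝ᵥ x) := by
  rw [Pmat, Rmat, fromBlocks_diagonal]
  refine dotProduct_diagonal_mulVec_le (fun i => ?_) x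
  rcases i with i | i <;> simpa using (by exact_mod_cast i.isLt : ((i : ℕ) : ℝ) + 1 ≤ m)

theorem lyapunov_decrease_general (m : ℕ) (hm : 1 ≤ m) (μ : ℝ) (hμ : μ ∈ Set.Ico (0 : ℝ) 1)
    (ω : ℝ → ℝ)
    (f : (Fin m ⊕ Fin m → ℝ) → ℝ → ℝ)
    (hf : ∀ (x : Fin m ⊕ Fin m → ℝ) (v : ℝ),
      (f x v) ^ 2 ≤ μ / m * (∑ i, (x i) ^ 2) + ω |v|) :
    (1 - (1 - μ) ^ 2 / m) ∈ Set.Ico (0 : ℝ) 1 ∧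
    ∀ (x : Fin m ⊕ Fin m → ℝ) (v ε : ℝ),
      (Amat m *ᵥ x + f x v • Gvec m + ε • Gvec m + v • Hvec m) ⬝ᵥ
          (Pmat m *ᵥ (Amat m *ᵥ x + f x v • Gvec m + ε • Gvec m + v • Hvec m)) ≤
        (1 - (1 - μ) ^ 2 / m) * (x ⬝ᵥ (Pmat m *ᵥ x)) +
          (m * (2 - μ) * ω |v| + m * v ^ 2) + m * (2 - μ) / (1 - μ) * ε ^ 2 := by
  refine ⟨one_sub_sq_div_mem_Ico hμ (by exact_mod_cast hm), fun x v ε => ?_⟩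
  have hnorm : ∑ i, x i ^ 2 = x ⬝ᵥ x := by simp only [dotProduct, sq]
  rw [add_assoc (Amat m *ᵥ x), ← add_smul, Pmat_quadForm_closedLoop (by omega)]
  have := sub_add_mul_add_sq_le (ε := ε) (by positivity) hμ (Pmat_quadForm_le m x)
    (hnorm ▸ hf x v)
  linarith

theorem lyapunov_decrease (m : ℕ) (hm : 1 ≤ m) (μ : ℝ) (hμ : μ ∈ Set.Ico (0 : ℝ) 1)
    (ω : ℝ → ℝ) (hω : IsClassK ω)
    (f : (Fin m ⊕ Fin m → ℝ) → ℝ → ℝ)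
    (hf : ∀ (x : Fin m ⊕ Fin m → ℝ) (v : ℝ),
      (f x v) ^ 2 ≤ μ / m * (∑ i, (x i) ^ 2) + ω |v|) :
    (1 - (1 - μ) ^ 2 / m) ∈ Set.Ico (0 : ℝ) 1 ∧
    ∀ (x : Fin m ⊕ Fin m → ℝ) (v ε : ℝ),
      (Amat m *ᵥ x + f x v • Gvec m + ε • Gvec m + v • Hvec m) ⬝ᵥ
          (Pmat m *ᵥ (Amat m *ᵥ x + f x v • Gvec m + ε • Gvec m + v • Hvec m)) ≤
        (1 - (1 - μ) ^ 2 / m) * (x ⬝ᵥ (Pmat m *ᵥ x)) +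
          (m * (2 - μ) * ω |v| + m * v ^ 2) + m * (2 - μ) / (1 - μ) * ε ^ 2 :=
  lyapunov_decrease_general m hm μ hμ ω f hf
end

section
/- Let τ, γ, ξ ∈ [0,∞), m ≥ 1, and 1 ≤ p ≤ m be integers. Define π(ξ,p) = ∑_{t=0}^{m−p} e^{−ξ t} (equal to m−p+1 when ξ = 0 and to (1 − e^{−(m−p+1)ξ})/(1 − e^{−ξ}) when ξ > 0). Suppose 2γτ·π(ξ,p) ≤ 1, and for z = (y₁,…,y_m,u₁,…,u_{m+1}) ∈ ℝ^{2m+1} let z_t = (y_{t+1},…,y_{t+p},u_{t+1},…,u_{t+p}) ∈ ℝ^{2p} and k̄(z) = τ ∑_{t=0}^{m−p} e^{−ξt} e^{−γ‖z_t‖²}. Then 2k̄(0) − 2k̄(z) ≤ ‖z‖² for all z ∈ ℝ^{2m+1}. -/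
theorem narx_kernel_delta_viability (m p : ℕ) (hp : 1 ≤ p) (hpm : p ≤ m)
    (τ γ ξ : ℝ) (hτ : 0 ≤ τ) (hγ : 0 ≤ γ) (hξ : 0 ≤ ξ)
    (hmain : 2 * γ * τ * (∑ t ∈ Finset.range (m - p + 1), Real.exp (-ξ * t)) ≤ 1)
    (y u : ℕ → ℝ) :
    2 * (τ * ∑ t ∈ Finset.range (m - p + 1), Real.exp (-ξ * t)) -
        2 * (τ * ∑ t ∈ Finset.range (m - p + 1),
          Real.exp (-ξ * t) *
            Real.exp (-γ * (∑ j ∈ Finset.range p, ((y (t + j)) ^ 2 + (u (t + j)) ^ 2)))) ≤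
      (∑ i ∈ Finset.range m, (y i) ^ 2) + ∑ i ∈ Finset.range (m + 1), (u i) ^ 2 := by
  set Z := (∑ i ∈ Finset.range m, (y i) ^ 2) + ∑ i ∈ Finset.range (m + 1), (u i) ^ 2
    with hZdef
  have hZ0 : 0 ≤ Z := by positivity
  set S : ℕ → ℝ := fun t => ∑ j ∈ Finset.range p, ((y (t + j)) ^ 2 + (u (t + j)) ^ 2)
    with hSdef
  have hS : ∀ t ∈ Finset.range (m - p + 1), S t ≤ Z := by
    intro t ht
    have htm : t + p ≤ m := by
      simp only [Finset.mem_range] at ht; omega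
    have h1 : ∑ j ∈ Finset.range p, (y (t + j)) ^ 2 ≤ ∑ i ∈ Finset.range m, (y i) ^ 2 := by
      have := Finset.sum_Ico_eq_sum_range (f := fun i => (y i) ^ 2) (m := t) (n := t + p)
      simp only [Nat.add_sub_cancel_left] at this
      rw [← this]
      apply Finset.sum_le_sum_of_subset_of_nonneg
      · intro i hi
        simp only [Finset.mem_Ico] at hi
        simp only [Finset.mem_range]; omega
      · intro i _ _; positivity
    have h2 : ∑ j ∈ Finset.range p, (u (t + j)) ^ 2 ≤ ∑ i ∈ Finset.range (m + 1), (u i) ^ 2 := by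
      have := Finset.sum_Ico_eq_sum_range (f := fun i => (u i) ^ 2) (m := t) (n := t + p)
      simp only [Nat.add_sub_cancel_left] at this
      rw [← this]
      apply Finset.sum_le_sum_of_subset_of_nonneg
      · intro i hi
        simp only [Finset.mem_Ico] at hi
        simp only [Finset.mem_range]; omega
      · intro i _ _; positivity
    calc S t = (∑ j ∈ Finset.range p, (y (t + j)) ^ 2)
          + ∑ j ∈ Finset.range p, (u (t + j)) ^ 2 := by
          rw [hSdef]; exact Finset.sum_add_distrib
      _ ≤ Z := add_le_add h1 h2
  have key : ∀ t ∈ Finset.range (m - p + 1),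
      Real.exp (-ξ * t) - Real.exp (-ξ * t) * Real.exp (-γ * S t)
        ≤ Real.exp (-ξ * t) * (γ * Z) := by
    intro t ht
    have h1 : 1 - Real.exp (-(γ * S t)) ≤ γ * S t := by
      have := Real.add_one_le_exp (-(γ * S t))
      linarith
    have hSZ : γ * S t ≤ γ * Z := mul_le_mul_of_nonneg_left (hS t ht) hγ
    have hE : 0 ≤ Real.exp (-ξ * t) := (Real.exp_pos _).le
    have : Real.exp (-ξ * t) * (1 - Real.exp (-(γ * S t)))
        ≤ Real.exp (-ξ * t) * (γ * Z) :=
      mul_le_mul_of_nonneg_left (le_trans h1 hSZ) hE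
    calc Real.exp (-ξ * t) - Real.exp (-ξ * t) * Real.exp (-γ * S t)
        = Real.exp (-ξ * t) * (1 - Real.exp (-(γ * S t))) := by ring_nf
      _ ≤ Real.exp (-ξ * t) * (γ * Z) := this
  set π := ∑ t ∈ Finset.range (m - p + 1), Real.exp (-ξ * t) with hπdef
  have hsum : (∑ t ∈ Finset.range (m - p + 1),
      (Real.exp (-ξ * t) - Real.exp (-ξ * t) * Real.exp (-γ * S t)))
      ≤ π * (γ * Z) := by
    calc (∑ t ∈ Finset.range (m - p + 1),
        (Real.exp (-ξ * t) - Real.exp (-ξ * t) * Real.exp (-γ * S t)))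
        ≤ ∑ t ∈ Finset.range (m - p + 1), Real.exp (-ξ * t) * (γ * Z) :=
          Finset.sum_le_sum key
      _ = π * (γ * Z) := by rw [hπdef, ← Finset.sum_mul]
  have hπ0 : 0 ≤ π := Finset.sum_nonneg fun t _ => (Real.exp_pos _).le
  have hfinal : 2 * τ * (π * (γ * Z)) ≤ Z := by
    have : 2 * τ * (π * (γ * Z)) = (2 * γ * τ * π) * Z := by ring
    rw [this]
    calc (2 * γ * τ * π) * Z ≤ 1 * Z := mul_le_mul_of_nonneg_right hmain hZ0
      _ = Z := one_mul Z
  calc 2 * (τ * π) - 2 * (τ * ∑ t ∈ Finset.range (m - p + 1),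
        Real.exp (-ξ * t) * Real.exp (-γ * S t))
      = 2 * τ * (∑ t ∈ Finset.range (m - p + 1),
        (Real.exp (-ξ * t) - Real.exp (-ξ * t) * Real.exp (-γ * S t))) := by
        rw [Finset.sum_sub_distrib]; ring
    _ ≤ 2 * τ * (π * (γ * Z)) := by
        apply mul_le_mul_of_nonneg_left hsum; positivity
    _ ≤ Z := hfinal
end
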